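/- If an array A is a (1̄, t)-constrained locating array for 1 ≤ t ≤ k, then A is a (1̄, t̄)-constrained locating array. -/

import Mathlib

def Test (k : ℕ) := Fin k → ℕ

def Interaction (k : ℕ) := Fin k → Option ℕ

/-- A test covers an interaction iff it extends it. -/
def Covers {k : ℕ} (σ : Test k) (T : Interaction k) : Prop :=
  ∀ i v, T i = some v → σ i = v

/-- Strength of an interaction: number of factors it assigns. -/
def strength {k : ℕ} (T : Interaction k) : ℕ :=
  (Finset.univ.filter (fun i => (T i).isSome)).card

/-- Set of rows (indices) of array `A` covering interaction `T`. -/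
def rho {k : ℕ} (A : List (Test k)) (T : Interaction k) : Set ℕ :=
  {n | ∃ h : n < A.length, Covers (A.get ⟨n, h⟩) T}

def rhoSet {k : ℕ} (A : List (Test k)) (𝒯 : Set (Interaction k)) : Set ℕ :=
  ⋃ T ∈ 𝒯, rho A T

/-- An array all of whose rows are valid tests. -/
def ValidArray {k : ℕ} (valid : Test k → Prop) (A : List (Test k)) : Prop :=
  ∀ σ ∈ A, valid σ

/-- A valid interaction: one covered by some valid test. -/
def ValidInt {k : ℕ} (valid : Test k → Prop) (T : Interaction k) : Prop :=
  ∃ σ, valid σ ∧ Covers σ T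

/-- Two sets of interactions are distinguishable iff some array of valid tests
separates their ρ-values. -/
def Distinguishable {k : ℕ} (valid : Test k → Prop) (𝒯₁ 𝒯₂ : Set (Interaction k)) : Prop :=
  ∃ A : List (Test k), ValidArray valid A ∧ rhoSet A 𝒯₁ ≠ rhoSet A 𝒯₂

def rhoFin {k : ℕ} (A : List (Test k)) (𝒯 : Finset (Interaction k)) : Set ℕ :=
  rhoSet A ↑𝒯

/-- A is a (1̄,t)-constrained locating array. -/
def IsCLAbar1t {k : ℕ} (valid : Test k → Prop) (t : ℕ) (A : List (Test k)) : Prop :=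
  ValidArray valid A ∧
  ∀ 𝒯₁ 𝒯₂ : Finset (Interaction k),
    (∀ T ∈ 𝒯₁, ValidInt valid T ∧ strength T = t) →
    (∀ T ∈ 𝒯₂, ValidInt valid T ∧ strength T = t) →
    𝒯₁.card ≤ 1 → 𝒯₂.card ≤ 1 →
    Distinguishable valid ↑𝒯₁ ↑𝒯₂ →
    rhoFin A 𝒯₁ ≠ rhoFin A 𝒯₂

/-- A is a (1̄,t̄)-constrained locating array. -/
def IsCLAbar1bart {k : ℕ} (valid : Test k → Prop) (t : ℕ) (A : List (Test k)) : Prop :=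
  ValidArray valid A ∧
  ∀ 𝒯₁ 𝒯₂ : Finset (Interaction k),
    (∀ T ∈ 𝒯₁, ValidInt valid T ∧ strength T ≤ t) →
    (∀ T ∈ 𝒯₂, ValidInt valid T ∧ strength T ≤ t) →
    𝒯₁.card ≤ 1 → 𝒯₂.card ≤ 1 →
    Distinguishable valid ↑𝒯₁ ↑𝒯₂ →
    rhoFin A 𝒯₁ ≠ rhoFin A 𝒯₂

/-!
A (1̄,t)-CLA contains, for every valid test σ and every set `D` of at most `t` factors, a row
agreeing with σ on `D`: pad `D` to `t` factors and separate σ restricted to it from `∅`. So every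
valid interaction of strength at most `t` is covered by `A`. Now let σ cover `T₁` but not `T₂`,
failing at factor `i`, and suppose `ρ(T₁) = ρ(T₂)`. If `supp T₁ ∪ {i}` has at most `t` factors, a
row agreeing with σ there covers `T₁`, hence `T₂`, which is absurd at `i`. Otherwise `T₁` has
strength exactly `t`; pad `T₂` to strength `t` with the values of a common row of `T₁` and `T₂`.
The padded interaction has the same ρ as `T₂`, yet σ separates it from `T₁`.
-/

open Finset

lemma Finset.eq_singleton_of_card_le_one {α : Type*} {s : Finset α} (hs : s.card ≤ 1) {a : α}
    (ha : a ∈ s) : s = {a} :=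
  eq_singleton_iff_unique_mem.2 ⟨ha, fun b hb => card_le_one.1 hs b hb a ha⟩

section

variable {k : ℕ}

namespace Interaction

def support (T : Interaction k) : Finset (Fin k) :=
  univ.filter fun i => (T i).isSome

lemma strength_eq_card_support (T : Interaction k) : strength T = T.support.card := rfl

lemma mem_support {T : Interaction k} {i : Fin k} : i ∈ T.support ↔ ∃ v, T i = some v := by
  simp [support, Option.isSome_iff_exists]

end Interaction

def Test.restrict (σ : Test k) (D : Finset (Fin k)) : Interaction k :=
  fun j => if j ∈ D then some (σ j) else none

open Interaction

lemma strength_restrict (σ : Test k) (D : Finset (Fin k)) : strength (σ.restrict D) = D.card := by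
  unfold strength Test.restrict
  congr 1
  ext j
  by_cases hj : j ∈ D <;> simp [hj]

lemma covers_restrict_iff {σ τ : Test k} {D : Finset (Fin k)} :
    Covers τ (σ.restrict D) ↔ ∀ j ∈ D, τ j = σ j := by
  refine ⟨fun h j hj => h j (σ j) (by simp [Test.restrict, hj]), fun h j v hv => ?_⟩
  by_cases hj : j ∈ D
  · simp only [Test.restrict, if_pos hj, Option.some.injEq] at hv
    rw [h j hj, hv]
  · simp [Test.restrict, hj] at hv

lemma covers_restrict_self (σ : Test k) (D : Finset (Fin k)) : Covers σ (σ.restrict D) :=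
  covers_restrict_iff.2 fun _ _ => rfl

lemma Covers.apply_eq {σ τ : Test k} {T : Interaction k} (hσ : Covers σ T) (hτ : Covers τ T)
    {j : Fin k} (hj : j ∈ T.support) : σ j = τ j := by
  obtain ⟨v, hv⟩ := mem_support.1 hj
  rw [hσ j v hv, hτ j v hv]

lemma Covers.of_covers_restrict {σ τ : Test k} {T : Interaction k} {D : Finset (Fin k)}
    (hσ : Covers σ T) (hD : T.support ⊆ D) (hτ : Covers τ (σ.restrict D)) : Covers τ T := by
  intro j v hv
  rw [covers_restrict_iff.1 hτ j (hD (mem_support.2 ⟨v, hv⟩)), hσ j v hv]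

lemma rho_mono {A : List (Test k)} {U T : Interaction k}
    (h : ∀ τ : Test k, Covers τ U → Covers τ T) : rho A U ⊆ rho A T :=
  fun _ ⟨hn, hc⟩ => ⟨hn, h _ hc⟩

lemma rhoFin_singleton (A : List (Test k)) (T : Interaction k) : rhoFin A {T} = rho A T := by
  simp [rhoFin, rhoSet]

lemma rhoFin_empty (A : List (Test k)) : rhoFin A ∅ = ∅ := by
  simp [rhoFin, rhoSet]

lemma mem_rhoSet_iff_of_lt {A : List (Test k)} {𝒯 : Set (Interaction k)} {n : ℕ}
    (hn : n < A.length) : n ∈ rhoSet A 𝒯 ↔ ∃ T ∈ 𝒯, Covers (A.get ⟨n, hn⟩) T := by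
  simp [rhoSet, rho, hn]

lemma lt_length_of_mem_rhoSet {A : List (Test k)} {𝒯 : Set (Interaction k)} {n : ℕ}
    (h : n ∈ rhoSet A 𝒯) : n < A.length := by
  obtain ⟨_, _, hn, _⟩ := Set.mem_iUnion₂.1 h
  exact hn

lemma distinguishable_iff {valid : Test k → Prop} {𝒯₁ 𝒯₂ : Set (Interaction k)} :
    Distinguishable valid 𝒯₁ 𝒯₂ ↔
      ∃ σ, valid σ ∧ Xor (∃ T ∈ 𝒯₁, Covers σ T) (∃ T ∈ 𝒯₂, Covers σ T) := by
  constructor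
  · rintro ⟨B, hB, hne⟩
    obtain ⟨n, hn⟩ : ∃ n, ¬(n ∈ rhoSet B 𝒯₁ ↔ n ∈ rhoSet B 𝒯₂) := by
      by_contra! h
      exact hne (Set.ext h)
    have hlt : n < B.length := by
      by_cases h₁ : n ∈ rhoSet B 𝒯₁
      · exact lt_length_of_mem_rhoSet h₁
      · exact lt_length_of_mem_rhoSet (by tauto : n ∈ rhoSet B 𝒯₂)
    refine ⟨B.get ⟨n, hlt⟩, hB _ (List.get_mem _ _), ?_⟩
    rwa [mem_rhoSet_iff_of_lt hlt, mem_rhoSet_iff_of_lt hlt, ← xor_iff_not_iff] at hn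
  · rintro ⟨σ, hσ, hx⟩
    refine ⟨[σ], by simpa [ValidArray] using hσ, fun he => ?_⟩
    have h0 (𝒯 : Set (Interaction k)) : 0 ∈ rhoSet [σ] 𝒯 ↔ ∃ T ∈ 𝒯, Covers σ T :=
      mem_rhoSet_iff_of_lt (by simp)
    rw [xor_iff_not_iff, ← h0, ← h0, he] at hx
    exact hx Iff.rfl

variable {valid : Test k → Prop} {t : ℕ} {A : List (Test k)}

lemma IsCLAbar1t.rho_restrict_nonempty (h : IsCLAbar1t valid t A) (ht : t ≤ k) {σ : Test k}
    (hσ : valid σ) {D : Finset (Fin k)} (hD : D.card ≤ t) : (rho A (σ.restrict D)).Nonempty := by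
  obtain ⟨E, hDE, -, hE⟩ := exists_subsuperset_card_eq (subset_univ D) hD (by simpa using ht)
  have hne := h.2 {σ.restrict E} ∅
    (by simpa [strength_restrict, hE] using ⟨σ, hσ, covers_restrict_self σ E⟩) (by simp)
    (by simp) (by simp)
    (distinguishable_iff.2 ⟨σ, hσ, .inl ⟨by simpa using covers_restrict_self σ E, by simp⟩⟩)
  rw [rhoFin_singleton, rhoFin_empty] at hne
  exact (Set.nonempty_iff_ne_empty.2 hne).mono (rho_mono fun τ hτ =>
    covers_restrict_iff.2 fun j hj => covers_restrict_iff.1 hτ j (hDE hj))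

lemma IsCLAbar1t.rho_nonempty (h : IsCLAbar1t valid t A) (ht : t ≤ k) {T : Interaction k}
    (hT : strength T ≤ t) {σ : Test k} (hσ : valid σ) (hc : Covers σ T) : (rho A T).Nonempty :=
  (h.rho_restrict_nonempty ht hσ hT).mono (rho_mono fun _ => hc.of_covers_restrict subset_rfl)

lemma rho_restrict_eq_of_rho_eq {A : List (Test k)} {T₁ T₂ : Interaction k}
    (heq : rho A T₁ = rho A T₂) {r : Test k} (h₁ : Covers r T₁) (h₂ : Covers r T₂)
    {D : Finset (Fin k)} (hD₂ : T₂.support ⊆ D) (hD : D ⊆ T₁.support ∪ T₂.support) :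
    rho A (r.restrict D) = rho A T₂ := by
  refine (rho_mono fun _ => h₂.of_covers_restrict hD₂).antisymm fun n hn => ⟨hn.1, ?_⟩
  obtain ⟨_, hc₁⟩ : n ∈ rho A T₁ := heq ▸ hn
  refine covers_restrict_iff.2 fun j hj => ?_
  rcases mem_union.1 (hD hj) with hj | hj
  · exact Covers.apply_eq hc₁ h₁ hj
  · exact hn.2.apply_eq h₂ hj

lemma IsCLAbar1t.rho_ne (h : IsCLAbar1t valid t A) (ht : t ≤ k) {T₁ T₂ : Interaction k}
    (hs₁ : strength T₁ ≤ t) (hs₂ : strength T₂ ≤ t) {σ : Test k} (hσ : valid σ)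
    (h₁ : Covers σ T₁) (h₂ : ¬Covers σ T₂) : rho A T₁ ≠ rho A T₂ := by
  intro heq
  obtain ⟨i, v, hT₂i, hσi⟩ : ∃ i v, T₂ i = some v ∧ σ i ≠ v := by simpa [Covers] using h₂
  by_cases hcard : (insert i T₁.support).card ≤ t
  · obtain ⟨n, hn, hc⟩ := h.rho_restrict_nonempty ht hσ hcard
    obtain ⟨_, hc₂⟩ : n ∈ rho A T₂ := heq ▸ ⟨hn, h₁.of_covers_restrict (subset_insert _ _) hc⟩
    exact hσi ((covers_restrict_iff.1 hc i (mem_insert_self _ _)).symm.trans (hc₂ i v hT₂i))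
  · have hT₁ : strength T₁ = t := by
      have := card_insert_le i T₁.support
      rw [strength_eq_card_support] at hs₁ ⊢
      omega
    obtain ⟨n, hn, hc₁⟩ := h.rho_nonempty ht hs₁ hσ h₁
    obtain ⟨_, hc₂⟩ : n ∈ rho A T₂ := heq ▸ ⟨hn, hc₁⟩
    obtain ⟨D, hD₂, hD, hDt⟩ := exists_subsuperset_card_eq subset_union_right hs₂
      (by rw [← hT₁]; exact card_le_card subset_union_left)
    set r := A.get ⟨n, hn⟩
    have hσD : ¬Covers σ (r.restrict D) := fun hc =>
      hσi ((covers_restrict_iff.1 hc i (hD₂ (mem_support.2 ⟨v, hT₂i⟩))).trans (hc₂ i v hT₂i))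
    refine h.2 {T₁} {r.restrict D} (by simpa [hT₁] using ⟨σ, hσ, h₁⟩)
      (by simpa [strength_restrict, hDt] using
        ⟨r, h.1 r (List.get_mem _ _), covers_restrict_self r D⟩)
      (by simp) (by simp)
      (distinguishable_iff.2 ⟨σ, hσ, .inl ⟨by simpa using h₁, by simpa using hσD⟩⟩) ?_
    rw [rhoFin_singleton, rhoFin_singleton, heq, rho_restrict_eq_of_rho_eq heq hc₁ hc₂ hD₂ hD]

lemma IsCLAbar1t.rhoFin_ne (h : IsCLAbar1t valid t A) (ht : t ≤ k)
    {𝒯₁ 𝒯₂ : Finset (Interaction k)} (hs₁ : ∀ T ∈ 𝒯₁, strength T ≤ t)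
    (hs₂ : ∀ T ∈ 𝒯₂, strength T ≤ t) (hcard₁ : 𝒯₁.card ≤ 1) (hcard₂ : 𝒯₂.card ≤ 1)
    {σ : Test k} (hσ : valid σ) (h₁ : ∃ T ∈ 𝒯₁, Covers σ T) (h₂ : ¬∃ T ∈ 𝒯₂, Covers σ T) :
    rhoFin A 𝒯₁ ≠ rhoFin A 𝒯₂ := by
  obtain ⟨T₁, hT₁, hc₁⟩ := h₁
  rw [Finset.eq_singleton_of_card_le_one hcard₁ hT₁, rhoFin_singleton]
  rcases 𝒯₂.eq_empty_or_nonempty with rfl | ⟨T₂, hT₂⟩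
  · rw [rhoFin_empty]
    exact (h.rho_nonempty ht (hs₁ T₁ hT₁) hσ hc₁).ne_empty
  · rw [Finset.eq_singleton_of_card_le_one hcard₂ hT₂, rhoFin_singleton]
    exact h.rho_ne ht (hs₁ T₁ hT₁) (hs₂ T₂ hT₂) hσ hc₁ fun hc => h₂ ⟨T₂, hT₂, hc⟩

end

theorem stmt10_general {k : ℕ} (valid : Test k → Prop) (t : ℕ) (ht2 : t ≤ k)
    (A : List (Test k)) (h : IsCLAbar1t valid t A) :
    IsCLAbar1bart valid t A := by
  refine ⟨h.1, fun 𝒯₁ 𝒯₂ hv₁ hv₂ hcard₁ hcard₂ hd => ?_⟩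
  have hs₁ (T) (hT : T ∈ 𝒯₁) := (hv₁ T hT).2
  have hs₂ (T) (hT : T ∈ 𝒯₂) := (hv₂ T hT).2
  obtain ⟨σ, hσ, hx⟩ := distinguishable_iff.1 hd
  simp only [mem_coe] at hx
  rcases hx with ⟨h₁, h₂⟩ | ⟨h₂, h₁⟩
  · exact h.rhoFin_ne ht2 hs₁ hs₂ hcard₁ hcard₂ hσ h₁ h₂
  · exact (h.rhoFin_ne ht2 hs₂ hs₁ hcard₂ hcard₁ hσ h₂ h₁).symm

theorem stmt10 {k : ℕ} (valid : Test k → Prop) (t : ℕ) (ht1 : 1 ≤ t) (ht2 : t ≤ k)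
    (A : List (Test k)) (h : IsCLAbar1t valid t A) :
    IsCLAbar1bart valid t A :=
  stmt10_general valid t ht2 A h
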